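/- arXiv:1703.08693 — 6 statements merged into one kernel-verified Lean document; each statement's English description precedes it below -/
import Mathlib

section
/- Let (P, y) be a locally fully faithful KZ doctrine on a 2-category 𝒞 and let L : A ⟶ B be a P-admissible 1-cell, so that PL := lan_L has a right adjoint res_L; let η denote the unit of the adjunction PL ⊣ res_L. Define R_L := res_L·y_B and let φ_L : y_A ⟶ R_L·L be the composite 2-cell y_A ⟶ res_L·PL·y_A ⟶ res_L·y_B·L obtained by pasting the unit η (whiskered by y_A) with res_L whiskered on the isomorphism y_L : PL·y_A ⟶ y_B·L. Then φ_L exhibits L as an absolute left lifting of y_A through R_L. -/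
/-!
Whiskering by the fully faithful `y B`, precomposing with the isomorphism `y_L`, and transposing
along `lan L ⊣ res` are bijections on 2-cells; their composite sends `δ : L ⟶ K` to the pasting
of `φ_L` with `δ`, which is therefore bijective. All three ingredients survive precomposition
with any `F : X ⟶ A`, which gives absoluteness.
-/

open CategoryTheory Bicategory

universe w v u

variable {𝒞 : Type u} [Bicategory.{w, v} 𝒞]

/-- A 2-cell `η : I ⟶ L ≫ R` exhibits `R` as a left extension of `I` along `L` when
pasting with `η` gives a bijection between 2-cells `R ⟶ M` and 2-cells `I ⟶ L ≫ M`. -/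
def ExhibitsLeftExt {a b c : 𝒞} (L : a ⟶ b) (I : a ⟶ c) (R : b ⟶ c)
    (η : I ⟶ L ≫ R) : Prop :=
  ∀ M : b ⟶ c, Function.Bijective (fun σ : R ⟶ M => η ≫ L ◁ σ)

/-- The left extension `(R, η)` of `I` along `L` is respected by `E` when the whiskering of
`η` by `E` exhibits `R ≫ E` as a left extension of `I ≫ E` along `L`. -/
def RespectsLeftExt {a b c d : 𝒞} (L : a ⟶ b) (I : a ⟶ c) (R : b ⟶ c)
    (η : I ⟶ L ≫ R) (E : c ⟶ d) : Prop :=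
  ExhibitsLeftExt L (I ≫ E) (R ≫ E) ((η ▷ E) ≫ (α_ L R E).hom)

/-- A 2-cell `η : I ⟶ L ≫ R` exhibits `L` as a left lifting of `I` through `R` when pasting
with `η` gives a bijection between 2-cells `L ⟶ K` and 2-cells `I ⟶ K ≫ R`. -/
def ExhibitsLeftLift {a b c : 𝒞} (R : b ⟶ c) (I : a ⟶ c) (L : a ⟶ b)
    (η : I ⟶ L ≫ R) : Prop :=
  ∀ K : a ⟶ b, Function.Bijective (fun δ : L ⟶ K => η ≫ δ ▷ R)

/-- The left lifting is absolute when it is preserved by whiskering with any 1-cell `F`. -/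
def ExhibitsAbsLeftLift {a b c : 𝒞} (R : b ⟶ c) (I : a ⟶ c) (L : a ⟶ b)
    (η : I ⟶ L ≫ R) : Prop :=
  ∀ {x : 𝒞} (F : x ⟶ a),
    ExhibitsLeftLift R (F ≫ I) (F ≫ L) ((F ◁ η) ≫ (α_ F L R).inv)

/-- A 1-cell is (representably) fully faithful when whiskering by it is bijective on 2-cells. -/
def FullyFaithful1Cell {a b : 𝒞} (F : a ⟶ b) : Prop :=
  ∀ {x : 𝒞} (u v : x ⟶ a), Function.Bijective (fun σ : u ⟶ v => σ ▷ F)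

/-- A KZ doctrine on a 2-category (Marmolejo–Wood style, in terms of left extensions). -/
structure KZDoctrine (𝒞 : Type u) [Bicategory.{w, v} 𝒞] where
  /-- action on objects -/
  P : 𝒞 → 𝒞
  /-- the units -/
  y : ∀ A : 𝒞, A ⟶ P A
  /-- chosen left extensions along the units -/
  ext : ∀ {A C : 𝒞}, (A ⟶ P C) → (P A ⟶ P C)
  /-- the invertible 2-cells exhibiting the chosen left extensions -/
  c : ∀ {A C : 𝒞} (F : A ⟶ P C), F ≅ y A ≫ ext F
  ext_isLeftExt : ∀ {A C : 𝒞} (F : A ⟶ P C),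
    ExhibitsLeftExt (y A) F (ext F) (c F).hom
  /-- (a) the identity 2-cell exhibits `𝟙 (P A)` as a left extension of `y A` along `y A` -/
  y_selfExt : ∀ A : 𝒞, ExhibitsLeftExt (y A) (y A) (𝟙 (P A)) (ρ_ (y A)).inv
  /-- (b) the chosen left extensions respect each other -/
  ext_respects : ∀ {A B C : 𝒞} (F : A ⟶ P B) (G : B ⟶ P C),
    RespectsLeftExt (y A) F (ext F) (c F).hom (ext G)

/-- `lan L` (also denoted `PL`), the chosen left extension of `y B ∘ L` along `y A`. -/
abbrev KZDoctrine.lan (D : KZDoctrine 𝒞) {A B : 𝒞} (L : A ⟶ B) : D.P A ⟶ D.P B :=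
  D.ext (L ≫ D.y B)

/-- An object `X` is `P`-cocomplete when every `G : A ⟶ X` admits a left extension along
`y A` exhibited by an invertible 2-cell, and these left extensions respect the chosen left
extensions of the KZ doctrine. -/
def PCocomplete (D : KZDoctrine 𝒞) (X : 𝒞) : Prop :=
  ∀ {A : 𝒞} (G : A ⟶ X), ∃ (Gb : D.P A ⟶ X) (cG : G ≅ D.y A ≫ Gb),
    ExhibitsLeftExt (D.y A) G Gb cG.hom ∧
    ∀ {A' : 𝒞} (F : A' ⟶ D.P A),
      RespectsLeftExt (D.y A') F (D.ext F) (D.c F).hom Gb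

/-- A 1-cell is a `P`-homomorphism when it respects all left extensions along units. -/
def PHomomorphism (D : KZDoctrine 𝒞) {X Y : 𝒞} (E : X ⟶ Y) : Prop :=
  ∀ {A : 𝒞} (G : A ⟶ X) (Gb : D.P A ⟶ X) (η : G ⟶ D.y A ≫ Gb),
    ExhibitsLeftExt (D.y A) G Gb η → RespectsLeftExt (D.y A) G Gb η E

/-- The data `(R, φ)` witnesses `P`-admissibility of `L`: `φ` exhibits `R` as a left
extension of `y A` along `L`, and this left extension is respected by every left extension
`Hb : P A ⟶ X` along `y A` into every `P`-cocomplete object `X`. -/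
def AdmissibleData (D : KZDoctrine 𝒞) {A B : 𝒞} (L : A ⟶ B) (R : B ⟶ D.P A)
    (φ : D.y A ⟶ L ≫ R) : Prop :=
  ExhibitsLeftExt L (D.y A) R φ ∧
  ∀ {X : 𝒞}, PCocomplete D X →
    ∀ (H : A ⟶ X) (Hb : D.P A ⟶ X) (cH : H ≅ D.y A ≫ Hb),
      ExhibitsLeftExt (D.y A) H Hb cH.hom → RespectsLeftExt L (D.y A) R φ Hb

/-- A 1-cell `L` is `P`-admissible when some `(R, φ)` witnesses its admissibility. -/
def PAdmissible (D : KZDoctrine 𝒞) {A B : 𝒞} (L : A ⟶ B) : Prop :=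
  ∃ (R : B ⟶ D.P A) (φ : D.y A ⟶ L ≫ R), AdmissibleData D L R φ

section LiftingCell

variable {a b c d : 𝒞} {f : a ⟶ b} {g : b ⟶ a} (adj : Bicategory.Adjunction f g)
  {i : d ⟶ a} {ℓ : d ⟶ c} {j : c ⟶ b}

def adjunctionLiftingCell (θ : i ≫ f ≅ ℓ ≫ j) : i ⟶ ℓ ≫ j ≫ g :=
  (ρ_ i).inv ≫ i ◁ adj.unit ≫ (α_ i f g).inv ≫ θ.hom ▷ g ≫ (α_ ℓ j g).hom

theorem exhibitsLeftLift_adjunctionLiftingCell (hj : FullyFaithful1Cell j)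
    (θ : i ≫ f ≅ ℓ ≫ j) : ExhibitsLeftLift (j ≫ g) i ℓ (adjunctionLiftingCell adj θ) := by
  intro K
  let transpose : (ℓ ≫ j ⟶ K ≫ j) ≃ (i ⟶ K ≫ j ≫ g) :=
    (Iso.homCongr θ.symm (Iso.refl _)).trans
      (adj.homEquiv₂.trans (Iso.homCongr (Iso.refl _) (α_ K j g)))
  have pasting_eq : (fun δ : ℓ ⟶ K => adjunctionLiftingCell adj θ ≫ δ ▷ (j ≫ g)) =
      transpose ∘ (fun δ : ℓ ⟶ K => δ ▷ j) := by
    funext δ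
    simp only [transpose, adjunctionLiftingCell, Function.comp_apply, Equiv.trans_apply,
      Iso.homCongr_apply, Adjunction.homEquiv₂_apply, Iso.symm_inv, Iso.refl_hom, Iso.refl_inv]
    bicategory
  rw [pasting_eq]
  exact transpose.bijective.comp (hj ℓ K)

theorem whiskerLeft_adjunctionLiftingCell {x : 𝒞} (F : x ⟶ d) (θ : i ≫ f ≅ ℓ ≫ j) :
    F ◁ adjunctionLiftingCell adj θ ≫ (α_ F ℓ (j ≫ g)).inv =
      adjunctionLiftingCell adj (α_ F i f ≪≫ whiskerLeftIso F θ ≪≫ (α_ F ℓ j).symm) := by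
  simp only [adjunctionLiftingCell, Iso.trans_hom, Iso.symm_hom, whiskerLeftIso_hom]
  bicategory

theorem exhibitsAbsLeftLift_adjunctionLiftingCell (hj : FullyFaithful1Cell j)
    (θ : i ≫ f ≅ ℓ ≫ j) : ExhibitsAbsLeftLift (j ≫ g) i ℓ (adjunctionLiftingCell adj θ) := by
  intro x F
  rw [whiskerLeft_adjunctionLiftingCell]
  exact exhibitsLeftLift_adjunctionLiftingCell adj hj _

end LiftingCell

/-- For a locally fully faithful KZ doctrine, if `L` is `P`-admissible
(Bunge–Funk: `PL := lan L` has a right adjoint `res` with unit `adj.unit`), then the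
pasting `φ_L` of the unit with `y_L` exhibits `L` as an absolute left lifting of `y A`
through `R_L := res ∘ y B`. -/
theorem stmt0 (D : KZDoctrine 𝒞) (hff : ∀ A : 𝒞, FullyFaithful1Cell (D.y A))
    {A B : 𝒞} (L : A ⟶ B) (res : D.P B ⟶ D.P A)
    (adj : Bicategory.Adjunction (D.lan L) res) :
    ExhibitsAbsLeftLift (D.y B ≫ res) (D.y A) L
      ((ρ_ (D.y A)).inv ≫ (D.y A ◁ adj.unit) ≫ (α_ (D.y A) (D.lan L) res).inv ≫
        ((D.c (L ≫ D.y B)).inv ▷ res) ≫ (α_ L (D.y B) res).hom) :=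
  exhibitsAbsLeftLift_adjunctionLiftingCell adj (hff B) (D.c (L ≫ D.y B)).symm
end

section
/- Let (P, y) be a KZ doctrine on a 2-category 𝒞 and let L : A ⟶ B and K : B ⟶ C be P-admissible 1-cells, with chosen left extensions (R_L, φ_L) of y_A along L and (R_K, φ_K) of y_B along K, and let c_{R_L} be the invertible 2-cell exhibiting res_L := \overline{R_L} as the left extension of R_L along y_B. Then the pasting of φ_L, c_{R_L} and φ_K exhibits res_L·R_K as a left extension of y_A along K·L. -/
/-!
Left extensions paste: if `φ` exhibits `R` as a left extension of `I` along `L` and `ψ`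
exhibits `S` as a left extension of `R` along `K`, then their pasting exhibits `S` as a left
extension of `I` along `L ≫ K`. Since `ext R_L` is a left extension along `y B` into the
`P`-cocomplete object `P A`, admissibility of `K` says that `φ_K ▷ ext R_L` exhibits
`R_K ≫ ext R_L` as a left extension of `y B ≫ ext R_L ≅ R_L` along `K`; pasting this with
`φ_L` gives the theorem.
-/

open CategoryTheory Bicategory

universe w v u

variable {𝒞 : Type u} [Bicategory.{w, v} 𝒞]

namespace ExhibitsLeftExt

variable {a b c : 𝒞}

theorem iso_hom_comp {L : a ⟶ b} {I I' : a ⟶ c} {R : b ⟶ c} {η : I ⟶ L ≫ R}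
    (hη : ExhibitsLeftExt L I R η) (e : I' ≅ I) : ExhibitsLeftExt L I' R (e.hom ≫ η) := by
  intro M
  have h : (fun σ : R ⟶ M => (e.hom ≫ η) ≫ L ◁ σ) =
      e.symm.homFromEquiv ∘ fun σ : R ⟶ M => η ≫ L ◁ σ := by
    funext σ
    simp
  rw [h]
  exact e.symm.homFromEquiv.bijective.comp (hη M)

theorem paste {d : 𝒞} {L : a ⟶ b} {K : b ⟶ c} {I : a ⟶ d} {R : b ⟶ d} {S : c ⟶ d}
    {φ : I ⟶ L ≫ R} {ψ : R ⟶ K ≫ S} (hφ : ExhibitsLeftExt L I R φ)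
    (hψ : ExhibitsLeftExt K R S ψ) :
    ExhibitsLeftExt (L ≫ K) I S (φ ≫ L ◁ ψ ≫ (α_ L K S).inv) := by
  intro M
  have h : (fun σ : S ⟶ M => (φ ≫ L ◁ ψ ≫ (α_ L K S).inv) ≫ (L ≫ K) ◁ σ) =
      (α_ L K M).homToEquiv.symm ∘ (fun τ : R ⟶ K ≫ M => φ ≫ L ◁ τ) ∘
        fun σ : S ⟶ M => ψ ≫ K ◁ σ := by
    funext σ
    simp
  rw [h]
  exact (α_ L K M).homToEquiv.symm.bijective.comp ((hφ (K ≫ M)).comp (hψ M))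

end ExhibitsLeftExt

theorem KZDoctrine.pCocomplete_P (D : KZDoctrine 𝒞) (A : 𝒞) : PCocomplete D (D.P A) :=
  fun G => ⟨D.ext G, D.c G, D.ext_isLeftExt G, fun F => D.ext_respects F G⟩

theorem AdmissibleData.respectsLeftExt_ext {D : KZDoctrine 𝒞} {A B C : 𝒞} {L : A ⟶ B}
    {R : B ⟶ D.P A} {φ : D.y A ⟶ L ≫ R} (h : AdmissibleData D L R φ) (F : A ⟶ D.P C) :
    RespectsLeftExt L (D.y A) R φ (D.ext F) :=
  h.2 (D.pCocomplete_P C) F (D.ext F) (D.c F) (D.ext_isLeftExt F)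

/-- For `P`-admissible `L` and `K`, the pasting of `φ_L`, `c_{R_L}` and
`φ_K` exhibits `res_L ∘ R_K = R_K ≫ D.ext R_L` as a left extension of `y A`
along `K ∘ L = L ≫ K`. -/
theorem stmt1 (D : KZDoctrine 𝒞) {A B C : 𝒞} (L : A ⟶ B) (K : B ⟶ C)
    (RL : B ⟶ D.P A) (φL : D.y A ⟶ L ≫ RL) (hL : AdmissibleData D L RL φL)
    (RK : C ⟶ D.P B) (φK : D.y B ⟶ K ≫ RK) (hK : AdmissibleData D K RK φK) :
    ExhibitsLeftExt (L ≫ K) (D.y A) (RK ≫ D.ext RL)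
      (φL ≫ (L ◁ (D.c RL).hom) ≫ (L ◁ (φK ▷ D.ext RL)) ≫
        (L ◁ (α_ K RK (D.ext RL)).hom) ≫ (α_ L K (RK ≫ D.ext RL)).inv) := by
  have hRK : ExhibitsLeftExt K RL (RK ≫ D.ext RL)
      ((D.c RL).hom ≫ (φK ▷ D.ext RL) ≫ (α_ K RK (D.ext RL)).hom) :=
    (hK.respectsLeftExt_ext RL).iso_hom_comp (D.c RL)
  simpa only [whiskerLeft_comp, Category.assoc] using hL.1.paste hRK
end

section
/- Let (P, y) be a KZ doctrine on a 2-category 𝒞 and let L : A ⟶ B be a P-admissible 1-cell with left extension (R_L, φ_L) of y_A along L, and suppose the object B is P-cocomplete. Then R_L : B ⟶ PA has a left adjoint L̄ ⊣ R_L, where L̄ : PA ⟶ B is the left extension of L along y_A (exhibited by an invertible 2-cell c_L, which exists since B is P-cocomplete). -/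
/-!
The unit `𝟙 ⟶ L̄ ≫ R_L` is the 2-cell corresponding to `φ_L ≫ c_L ▷ R_L` under the universal
property of `𝟙 (P A)` as the left extension of `y A` along itself; the counit `R_L ≫ L̄ ⟶ 𝟙 B`
is the 2-cell corresponding to `c_L⁻¹` under the universal property of `R_L ≫ L̄`, which is a
left extension of `y A ≫ L̄ ≅ L` along `L` because `L̄` respects `(R_L, φ_L)`. Each triangle
identity then follows from uniqueness of factorizations through a left extension: after pasting
with `c_L` (resp. `φ_L`) both sides reduce to `c_L` (resp. `φ_L`).
-/

open CategoryTheory Bicategory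

universe w v u

variable {𝒞 : Type u} [Bicategory.{w, v} 𝒞]

namespace ExhibitsLeftExt

variable {a b c : 𝒞} {L : a ⟶ b} {I : a ⟶ c} {R : b ⟶ c} {η : I ⟶ L ≫ R}

noncomputable def desc (h : ExhibitsLeftExt L I R η) {M : b ⟶ c} (θ : I ⟶ L ≫ M) : R ⟶ M :=
  ((h M).2 θ).choose

theorem fac (h : ExhibitsLeftExt L I R η) {M : b ⟶ c} (θ : I ⟶ L ≫ M) :
    η ≫ L ◁ h.desc θ = θ :=
  ((h M).2 θ).choose_spec

theorem hom_ext (h : ExhibitsLeftExt L I R η) {M : b ⟶ c} {σ τ : R ⟶ M}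
    (e : η ≫ L ◁ σ = η ≫ L ◁ τ) : σ = τ :=
  (h M).1 e

end ExhibitsLeftExt

section AdjunctionOfLeftExt

variable {a b p : 𝒞} {j : a ⟶ p} {L : a ⟶ b} {Lb : p ⟶ b} {cL : L ≅ j ≫ Lb}
  {R : b ⟶ p} {φ : j ⟶ L ≫ R} {η : 𝟙 p ⟶ Lb ≫ R} {ϵ : R ≫ Lb ⟶ 𝟙 b}

theorem leftZigzag_eq_of_exhibitsLeftExt (hLb : ExhibitsLeftExt j L Lb cL.hom)
    (hη : (ρ_ j).inv ≫ j ◁ η = φ ≫ cL.hom ▷ R ≫ (α_ j Lb R).hom)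
    (hϵ : (φ ▷ Lb ≫ (α_ L R Lb).hom) ≫ L ◁ ϵ = cL.inv ≫ (ρ_ L).inv) :
    leftZigzag η ϵ = (λ_ Lb).hom ≫ (ρ_ Lb).inv := by
  suffices (λ_ Lb).inv ≫ leftZigzag η ϵ ≫ (ρ_ Lb).hom = 𝟙 Lb by
    simpa using (λ_ Lb).hom ≫= this =≫ (ρ_ Lb).inv
  refine hLb.hom_ext ?_
  calc cL.hom ≫ j ◁ ((λ_ Lb).inv ≫ leftZigzag η ϵ ≫ (ρ_ Lb).hom)
      = cL.hom ⊗≫ ((ρ_ j).inv ≫ j ◁ η) ▷ Lb ⊗≫ j ◁ Lb ◁ ϵ ⊗≫ 𝟙 _ := by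
        bicategory
    _ = cL.hom ⊗≫ (φ ▷ Lb ≫ (α_ L R Lb).hom) ⊗≫
          (cL.hom ▷ (R ≫ Lb) ≫ (j ≫ Lb) ◁ ϵ) ⊗≫ 𝟙 _ := by
        rw [hη]; bicategory
    _ = cL.hom ⊗≫ ((φ ▷ Lb ≫ (α_ L R Lb).hom) ≫ L ◁ ϵ) ⊗≫ cL.hom ▷ 𝟙 b ⊗≫ 𝟙 _ := by
        rw [← whisker_exchange]; bicategory
    _ = cL.hom ≫ cL.inv ≫ cL.hom := by
        rw [hϵ]; bicategory
    _ = cL.hom ≫ j ◁ 𝟙 Lb := by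
        simp

theorem rightZigzag_eq_of_exhibitsLeftExt (hR : ExhibitsLeftExt L j R φ)
    (hη : (ρ_ j).inv ≫ j ◁ η = φ ≫ cL.hom ▷ R ≫ (α_ j Lb R).hom)
    (hϵ : (φ ▷ Lb ≫ (α_ L R Lb).hom) ≫ L ◁ ϵ = cL.inv ≫ (ρ_ L).inv) :
    rightZigzag η ϵ = (ρ_ R).hom ≫ (λ_ R).inv := by
  suffices (ρ_ R).inv ≫ rightZigzag η ϵ ≫ (λ_ R).hom = 𝟙 R by
    simpa using (ρ_ R).hom ≫= this =≫ (λ_ R).inv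
  refine hR.hom_ext ?_
  calc φ ≫ L ◁ ((ρ_ R).inv ≫ rightZigzag η ϵ ≫ (λ_ R).hom)
      = 𝟙 _ ⊗≫ (φ ▷ 𝟙 p ≫ (L ≫ R) ◁ η) ⊗≫ L ◁ ϵ ▷ R ⊗≫ 𝟙 _ := by
        bicategory
    _ = 𝟙 _ ⊗≫ ((ρ_ j).inv ≫ j ◁ η) ⊗≫ φ ▷ (Lb ≫ R) ⊗≫ L ◁ ϵ ▷ R ⊗≫ 𝟙 _ := by
        rw [← whisker_exchange]; bicategory
    _ = φ ⊗≫ cL.hom ▷ R ⊗≫ ((φ ▷ Lb ≫ (α_ L R Lb).hom) ≫ L ◁ ϵ) ▷ R ⊗≫ 𝟙 _ := by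
        rw [hη]; bicategory
    _ = φ ⊗≫ (cL.hom ≫ cL.inv) ▷ R ⊗≫ 𝟙 _ := by
        rw [hϵ]; bicategory
    _ = φ ≫ L ◁ 𝟙 R := by
        rw [Iso.hom_inv_id]; bicategory

noncomputable def CategoryTheory.Bicategory.Adjunction.ofExhibitsLeftExt
    (hj : ExhibitsLeftExt j j (𝟙 p) (ρ_ j).inv) (hLb : ExhibitsLeftExt j L Lb cL.hom)
    (hR : ExhibitsLeftExt L j R φ) (hres : RespectsLeftExt L j R φ Lb) : Lb ⊣ R where
  unit := hj.desc (φ ≫ cL.hom ▷ R ≫ (α_ j Lb R).hom)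
  counit := hres.desc (cL.inv ≫ (ρ_ L).inv)
  left_triangle := leftZigzag_eq_of_exhibitsLeftExt hLb (hj.fac _) (hres.fac _)
  right_triangle := rightZigzag_eq_of_exhibitsLeftExt hR (hj.fac _) (hres.fac _)

end AdjunctionOfLeftExt

/-- If `L : A ⟶ B` is `P`-admissible with left extension `(R_L, φ_L)` and
`B` is `P`-cocomplete, then `R_L` has a left adjoint `L̄`, where `L̄` is the left
extension of `L` along `y A` exhibited by an invertible 2-cell `c_L`. -/
theorem stmt2 (D : KZDoctrine 𝒞) {A B : 𝒞} (L : A ⟶ B)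
    (RL : B ⟶ D.P A) (φL : D.y A ⟶ L ≫ RL) (hL : AdmissibleData D L RL φL)
    (hB : PCocomplete D B)
    (Lb : D.P A ⟶ B) (cL : L ≅ D.y A ≫ Lb)
    (hLb : ExhibitsLeftExt (D.y A) L Lb cL.hom) :
    Nonempty (Bicategory.Adjunction Lb RL) :=
  ⟨.ofExhibitsLeftExt (D.y_selfExt A) hLb hL.1 (hL.2 hB L Lb cL hLb)⟩
end

section
/- Let (P, y) be a KZ doctrine on a 2-category 𝒞 and let L : A ⟶ B be a P-admissible 1-cell with left extension (R_L, φ_L) of y_A along L. Let res_L : PB ⟶ PA denote the left extension of R_L along y_B (exhibited by the invertible 2-cell c_{R_L}). Then: (i) res_L has a left adjoint lan_L, given by the left extension of y_B·L along y_A; and (ii) if moreover R_L is P-admissible, then res_L has a right adjoint ran_L := R_{R_L}, the left extension of y_B along R_L. -/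
open CategoryTheory Bicategory

universe w v u

variable {𝒞 : Type u} [Bicategory.{w, v} 𝒞]

/-!
Both adjunctions come from one principle. Let `j` be dense (`𝟙` is a left extension of `j` along
itself), let `κ : K ≅ j ≫ f` exhibit `f` as a left extension of `K` along `j`, and let
`ψ : j ⟶ K ≫ g` exhibit `g` as a left extension of `j` along `K` that `f` respects. Then `f ⊣ g`:
the unit extends `ψ ≫ κ ▷ g` along `j`, the counit extends `κ⁻¹` along `K`, and each triangle
identity holds because both sides paste to the same 2-cell with a universal one.
Part (ii) is the case `j = y B`, `K = R_L`. Part (i) is the case `j = y A`, `K = L ≫ y B`, since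
pasting `φ_L` with `c_{R_L}` exhibits `res_L` as a left extension of `y A` along `L ≫ y B`, and
`lan_L` respects both pieces of that pasting.
-/

theorem KZDoctrine.pCocomplete (D : KZDoctrine 𝒞) (B : 𝒞) : PCocomplete D (D.P B) :=
  fun G => ⟨D.ext G, D.c G, D.ext_isLeftExt G, fun F => D.ext_respects F G⟩

section LeftExtensions

variable {a b c d : 𝒞}

theorem ExhibitsLeftExt.hom_ext_s3 {L : a ⟶ b} {I : a ⟶ c} {R : b ⟶ c} {η : I ⟶ L ≫ R}
    (h : ExhibitsLeftExt L I R η) {M : b ⟶ c} {σ τ : R ⟶ M}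
    (e : η ≫ L ◁ σ = η ≫ L ◁ τ) : σ = τ :=
  (h M).1 e

theorem ExhibitsLeftExt.exists_fac {L : a ⟶ b} {I : a ⟶ c} {R : b ⟶ c} {η : I ⟶ L ≫ R}
    (h : ExhibitsLeftExt L I R η) {M : b ⟶ c} (θ : I ⟶ L ≫ M) : ∃ σ : R ⟶ M, η ≫ L ◁ σ = θ :=
  (h M).2 θ

theorem ExhibitsLeftExt.comp {L : a ⟶ b} {K : b ⟶ c} {I : a ⟶ d} {R : b ⟶ d} {S : c ⟶ d}
    {η : I ⟶ L ≫ R} {μ : R ⟶ K ≫ S}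
    (hη : ExhibitsLeftExt L I R η) (hμ : ExhibitsLeftExt K R S μ) :
    ExhibitsLeftExt (L ≫ K) I S (η ≫ L ◁ μ ≫ (α_ L K S).inv) := by
  intro M
  have hassoc := (Iso.homCongr (Iso.refl I) (α_ L K M).symm).bijective
  convert hassoc.comp ((hη (K ≫ M)).comp (hμ M)) using 1
  funext σ
  simp

theorem RespectsLeftExt.comp {L : a ⟶ b} {K : b ⟶ c} {I : a ⟶ d} {R : b ⟶ d} {S : c ⟶ d}
    {η : I ⟶ L ≫ R} {μ : R ⟶ K ≫ S} {e : 𝒞} {E : d ⟶ e}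
    (hη : RespectsLeftExt L I R η E) (hμ : RespectsLeftExt K R S μ E) :
    RespectsLeftExt (L ≫ K) I S (η ≫ L ◁ μ ≫ (α_ L K S).inv) E := by
  have pasting : (η ≫ L ◁ μ ≫ (α_ L K S).inv) ▷ E ≫ (α_ (L ≫ K) S E).hom =
      (η ▷ E ≫ (α_ L R E).hom) ≫ L ◁ (μ ▷ E ≫ (α_ K S E).hom) ≫ (α_ L K (S ≫ E)).inv := by
    bicategory
  unfold RespectsLeftExt
  rw [pasting]
  exact ExhibitsLeftExt.comp hη hμ

end LeftExtensions

section Adjunction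

variable {x a b : 𝒞} {j : x ⟶ b} {K : x ⟶ a} {f : b ⟶ a} {g : a ⟶ b}
  {κ : K ≅ j ≫ f} {ψ : j ⟶ K ≫ g} {unit : 𝟙 b ⟶ f ≫ g} {counit : g ≫ f ⟶ 𝟙 a}

theorem leftZigzag_eq_of_exhibitsLeftExt_s3 (hf : ExhibitsLeftExt j K f κ.hom)
    (hunit : j ◁ unit = (ρ_ j).hom ≫ ψ ≫ κ.hom ▷ g ≫ (α_ j f g).hom)
    (hcounit : (ψ ▷ f ≫ (α_ K g f).hom) ≫ K ◁ counit = κ.inv ≫ (ρ_ K).inv) :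
    leftZigzag unit counit = (λ_ f).hom ≫ (ρ_ f).inv := by
  have key : (λ_ f).inv ≫ leftZigzag unit counit ≫ (ρ_ f).hom = 𝟙 f := by
    refine hf.hom_ext_s3 ?_
    calc κ.hom ≫ j ◁ ((λ_ f).inv ≫ leftZigzag unit counit ≫ (ρ_ f).hom)
        = κ.hom ⊗≫ (j ◁ unit) ▷ f ⊗≫ (j ≫ f) ◁ counit ⊗≫ 𝟙 (j ≫ f) := by
          dsimp only [leftZigzag]; bicategory
      _ = κ.hom ⊗≫ ψ ▷ f ⊗≫ (κ.hom ▷ (g ≫ f) ≫ (j ≫ f) ◁ counit) ⊗≫ 𝟙 (j ≫ f) := by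
          rw [hunit]; bicategory
      _ = κ.hom ⊗≫ ψ ▷ f ⊗≫ (K ◁ counit ≫ κ.hom ▷ 𝟙 a) ⊗≫ 𝟙 (j ≫ f) := by
          rw [← whisker_exchange]
      _ = κ.hom ≫ ((ψ ▷ f ≫ (α_ K g f).hom) ≫ K ◁ counit) ≫ (ρ_ K).hom ≫ κ.hom ≫ j ◁ 𝟙 f := by
          bicategory
      _ = κ.hom ≫ j ◁ 𝟙 f := by rw [hcounit]; simp
  calc leftZigzag unit counit
      = (λ_ f).hom ≫ ((λ_ f).inv ≫ leftZigzag unit counit ≫ (ρ_ f).hom) ≫ (ρ_ f).inv := by simp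
    _ = (λ_ f).hom ≫ (ρ_ f).inv := by rw [key, Category.id_comp]

theorem rightZigzag_eq_of_exhibitsLeftExt_s3 (hg : ExhibitsLeftExt K j g ψ)
    (hunit : j ◁ unit = (ρ_ j).hom ≫ ψ ≫ κ.hom ▷ g ≫ (α_ j f g).hom)
    (hcounit : (ψ ▷ f ≫ (α_ K g f).hom) ≫ K ◁ counit = κ.inv ≫ (ρ_ K).inv) :
    rightZigzag unit counit = (ρ_ g).hom ≫ (λ_ g).inv := by
  have key : (ρ_ g).inv ≫ rightZigzag unit counit ≫ (λ_ g).hom = 𝟙 g := by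
    refine hg.hom_ext_s3 ?_
    calc ψ ≫ K ◁ ((ρ_ g).inv ≫ rightZigzag unit counit ≫ (λ_ g).hom)
        = 𝟙 j ⊗≫ (ψ ▷ 𝟙 b ≫ (K ≫ g) ◁ unit) ⊗≫ K ◁ (counit ▷ g) ⊗≫ 𝟙 (K ≫ g) := by
          dsimp only [rightZigzag]; bicategory
      _ = 𝟙 j ⊗≫ (j ◁ unit ≫ ψ ▷ (f ≫ g)) ⊗≫ K ◁ (counit ▷ g) ⊗≫ 𝟙 (K ≫ g) := by
          rw [← whisker_exchange]
      _ = ψ ⊗≫ κ.hom ▷ g ⊗≫ ((ψ ▷ f ≫ (α_ K g f).hom) ≫ K ◁ counit) ▷ g ⊗≫ 𝟙 (K ≫ g) := by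
          rw [hunit]; bicategory
      _ = ψ ⊗≫ (κ.hom ≫ κ.inv) ▷ g ⊗≫ 𝟙 (K ≫ g) := by rw [hcounit]; bicategory
      _ = ψ ≫ K ◁ 𝟙 g := by rw [Iso.hom_inv_id]; bicategory
  calc rightZigzag unit counit
      = (ρ_ g).hom ≫ ((ρ_ g).inv ≫ rightZigzag unit counit ≫ (λ_ g).hom) ≫ (λ_ g).inv := by simp
    _ = (ρ_ g).hom ≫ (λ_ g).inv := by rw [key, Category.id_comp]

theorem nonempty_adjunction_of_exhibitsLeftExt (κ : K ≅ j ≫ f) (ψ : j ⟶ K ≫ g)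
    (hj : ExhibitsLeftExt j j (𝟙 b) (ρ_ j).inv) (hf : ExhibitsLeftExt j K f κ.hom)
    (hg : ExhibitsLeftExt K j g ψ) (hfg : RespectsLeftExt K j g ψ f) : Nonempty (f ⊣ g) := by
  obtain ⟨counit, hcounit⟩ := hfg.exists_fac (κ.inv ≫ (ρ_ K).inv)
  obtain ⟨unit, hunit⟩ := hj.exists_fac (ψ ≫ κ.hom ▷ g ≫ (α_ j f g).hom)
  replace hunit : j ◁ unit = (ρ_ j).hom ≫ ψ ≫ κ.hom ▷ g ≫ (α_ j f g).hom := by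
    rw [← hunit, Iso.hom_inv_id_assoc]
  exact ⟨⟨unit, counit, leftZigzag_eq_of_exhibitsLeftExt_s3 hf hunit hcounit,
    rightZigzag_eq_of_exhibitsLeftExt_s3 hg hunit hcounit⟩⟩

end Adjunction

/-- For `P`-admissible `L` with left extension `(R_L, φ_L)`, the 1-cell
`res_L := D.ext R_L` (the left extension of `R_L` along `y B`, exhibited by `c_{R_L}`)
(i) has a left adjoint `lan_L := D.ext (L ≫ y B)`, and (ii) if `R_L` is `P`-admissible
then `res_L` has a right adjoint `ran_L := R_{R_L}`, the left extension of `y B`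
along `R_L`. -/
theorem stmt3 (D : KZDoctrine 𝒞) {A B : 𝒞} (L : A ⟶ B)
    (RL : B ⟶ D.P A) (φL : D.y A ⟶ L ≫ RL) (hL : AdmissibleData D L RL φL) :
    Nonempty (Bicategory.Adjunction (D.lan L) (D.ext RL)) ∧
    (∀ (RRL : D.P A ⟶ D.P B) (φRL : D.y B ⟶ RL ≫ RRL),
      AdmissibleData D RL RRL φRL →
        Nonempty (Bicategory.Adjunction (D.ext RL) RRL)) := by
  constructor
  · have lan_respects_φL := hL.2 (D.pCocomplete B) _ _ _ (D.ext_isLeftExt (L ≫ D.y B))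
    exact nonempty_adjunction_of_exhibitsLeftExt (D.c (L ≫ D.y B)) _ (D.y_selfExt A)
      (D.ext_isLeftExt _) (hL.1.comp (D.ext_isLeftExt RL))
      (lan_respects_φL.comp (D.ext_respects RL (L ≫ D.y B)))
  · intro RRL φRL hR
    exact nonempty_adjunction_of_exhibitsLeftExt (D.c RL) φRL (D.y_selfExt B)
      (D.ext_isLeftExt RL) hR.1 (hR.2 (D.pCocomplete A) RL _ _ (D.ext_isLeftExt RL))
end

section
/- Let (P, y) be a KZ doctrine on a 2-category 𝒞. If a 1-cell L : A ⟶ B is P-admissible, then the composite y_B·L : A ⟶ PB is P-admissible; its left extension of y_A along y_B·L is given by res_L, the left extension of R_L along y_B, exhibited by the pasting of φ_L with c_{R_L}. -/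
open CategoryTheory Bicategory

universe w v u

variable {𝒞 : Type u} [Bicategory.{w, v} 𝒞]

/-!
Pasting the left extension `φ_L` of `y_A` along `L` with the left extension `c_{R_L}` of `R_L`
along `y_B` gives a left extension along `y_B ∘ L`, and pasting commutes with whiskering. So
it suffices that a left extension `Hb` along `y_A` into a `P`-cocomplete object respects both
pieces: `φ_L` by admissibility of `L`, and `c_{R_L}` because `Hb` is isomorphic to the left
extension provided by cocompleteness, which respects the chosen extensions.
-/

section LeftExtensions

variable {a b c d : 𝒞}

theorem ExhibitsLeftExt.of_iso {L : a ⟶ b} {I I' : a ⟶ c} {R R' : b ⟶ c} {η : I ⟶ L ≫ R}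
    (h : ExhibitsLeftExt L I R η) (i : I' ≅ I) (j : R ≅ R') {η' : I' ⟶ L ≫ R'}
    (hη : i.hom ≫ η ≫ L ◁ j.hom = η') : ExhibitsLeftExt L I' R' η' := by
  subst hη
  intro M
  have hfactor : (fun σ : R' ⟶ M => (i.hom ≫ η ≫ L ◁ j.hom) ≫ L ◁ σ) =
      i.symm.homFromEquiv ∘ (fun δ : R ⟶ M => η ≫ L ◁ δ) ∘ j.symm.homFromEquiv := by
    funext σ
    simp [Bicategory.whiskerLeft_comp]
  rw [hfactor]
  exact i.symm.homFromEquiv.bijective.comp ((h M).comp j.symm.homFromEquiv.bijective)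

theorem ExhibitsLeftExt.paste_s4 {L₁ : a ⟶ b} {L₂ : b ⟶ c} {I : a ⟶ d} {R : b ⟶ d} {S : c ⟶ d}
    {η₁ : I ⟶ L₁ ≫ R} {η₂ : R ⟶ L₂ ≫ S}
    (h₁ : ExhibitsLeftExt L₁ I R η₁) (h₂ : ExhibitsLeftExt L₂ R S η₂) :
    ExhibitsLeftExt (L₁ ≫ L₂) I S (η₁ ≫ L₁ ◁ η₂ ≫ (α_ L₁ L₂ S).inv) := by
  intro M
  have hfactor : (fun σ : S ⟶ M => (η₁ ≫ L₁ ◁ η₂ ≫ (α_ L₁ L₂ S).inv) ≫ (L₁ ≫ L₂) ◁ σ) =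
      (α_ L₁ L₂ M).symm.homToEquiv ∘ (fun δ : R ⟶ L₂ ≫ M => η₁ ≫ L₁ ◁ δ) ∘
        (fun σ : S ⟶ M => η₂ ≫ L₂ ◁ σ) := by
    funext σ
    simp [Bicategory.comp_whiskerLeft, Bicategory.whiskerLeft_comp]
  rw [hfactor]
  exact (α_ L₁ L₂ M).symm.homToEquiv.bijective.comp ((h₁ (L₂ ≫ M)).comp (h₂ M))

theorem ExhibitsLeftExt.exists_iso {L : a ⟶ b} {I : a ⟶ c} {R R' : b ⟶ c}
    {η : I ⟶ L ≫ R} {η' : I ⟶ L ≫ R'}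
    (h : ExhibitsLeftExt L I R η) (h' : ExhibitsLeftExt L I R' η') :
    ∃ e : R ≅ R', η ≫ L ◁ e.hom = η' := by
  obtain ⟨σ, hσ⟩ := (h R').2 η'
  obtain ⟨τ, hτ⟩ := (h' R).2 η
  dsimp only at hσ hτ
  refine ⟨⟨σ, τ, (h R).1 ?_, (h' R').1 ?_⟩, hσ⟩ <;>
    simp only [Bicategory.whiskerLeft_comp, ← Category.assoc, hσ, hτ, Bicategory.whiskerLeft_id,
      Category.comp_id]

theorem RespectsLeftExt.of_iso {L : a ⟶ b} {I : a ⟶ c} {R : b ⟶ c} {η : I ⟶ L ≫ R}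
    {E E' : c ⟶ d} (h : RespectsLeftExt L I R η E) (e : E ≅ E') :
    RespectsLeftExt L I R η E' := by
  refine ExhibitsLeftExt.of_iso h (whiskerLeftIso I e.symm) (whiskerLeftIso R e) ?_
  simp only [whiskerLeftIso_hom, Iso.symm_hom, Category.assoc, whisker_exchange_assoc]
  simp [← Bicategory.whiskerLeft_comp]

theorem RespectsLeftExt.paste_s4 {L₁ : a ⟶ b} {L₂ : b ⟶ c} {I : a ⟶ d} {R : b ⟶ d} {S : c ⟶ d}
    {η₁ : I ⟶ L₁ ≫ R} {η₂ : R ⟶ L₂ ≫ S} {x : 𝒞} {E : d ⟶ x}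
    (h₁ : RespectsLeftExt L₁ I R η₁ E) (h₂ : RespectsLeftExt L₂ R S η₂ E) :
    RespectsLeftExt (L₁ ≫ L₂) I S (η₁ ≫ L₁ ◁ η₂ ≫ (α_ L₁ L₂ S).inv) E := by
  unfold RespectsLeftExt
  convert ExhibitsLeftExt.paste_s4 h₁ h₂ using 1
  bicategory

end LeftExtensions

theorem PCocomplete.respectsLeftExt_ext {D : KZDoctrine 𝒞} {X : 𝒞} (hX : PCocomplete D X)
    {A A' : 𝒞} {H : A ⟶ X} {Hb : D.P A ⟶ X} {η : H ⟶ D.y A ≫ Hb}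
    (hH : ExhibitsLeftExt (D.y A) H Hb η) (F : A' ⟶ D.P A) :
    RespectsLeftExt (D.y A') F (D.ext F) (D.c F).hom Hb := by
  obtain ⟨_, _, hG, hG_respects⟩ := hX H
  obtain ⟨e, -⟩ := hG.exists_iso hH
  exact (hG_respects F).of_iso e

/-- If `L` is `P`-admissible then `y B ∘ L` is `P`-admissible, with left
extension of `y A` along `y B ∘ L` given by `res_L = D.ext R_L`, exhibited by the
pasting of `φ_L` with `c_{R_L}`. -/
theorem stmt4 (D : KZDoctrine 𝒞) {A B : 𝒞} (L : A ⟶ B)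
    (RL : B ⟶ D.P A) (φL : D.y A ⟶ L ≫ RL) (hL : AdmissibleData D L RL φL) :
    AdmissibleData D (L ≫ D.y B) (D.ext RL)
      (φL ≫ (L ◁ (D.c RL).hom) ≫ (α_ L (D.y B) (D.ext RL)).inv) := by
  refine ⟨hL.1.paste_s4 (D.ext_isLeftExt RL), fun hX H Hb cH hH => ?_⟩
  exact (hL.2 hX H Hb cH hH).paste_s4 (hX.respectsLeftExt_ext hH RL)
end

section
/- Let (P, y) be a KZ doctrine on a 2-category 𝒞 and L : A ⟶ B a 1-cell such that PL := lan_L has a right adjoint res_L. Then the identity 2-cell exhibits res_L : PB ⟶ PA as a left extension of res_L·y_B along y_B; in particular res_L respects the left extension id_{PB} of y_B along y_B, and res_L is a P-homomorphism. -/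
open CategoryTheory Bicategory

universe w v u

variable {𝒞 : Type u} [Bicategory.{w, v} 𝒞]

/-! Let `E` be the chosen extension of `y_B ≫ res` along `y_B`. Since `PL ⊣ res` and `PL`
respects `E`, the counit restricted along `y_B` corresponds to a 2-cell `E ≫ PL ⟶ 1`, whose
mate `e : E ⟶ res` restricts along `y_B` to the inverse of the structure cell of `E`. Density
of `y_A` then lets the unit of the adjunction factor through `PL ◁ e`, which gives `e` a
section; so `e` is invertible and `res` inherits the universal property of `E`. Finally, every
left extension along a unit is isomorphic to the chosen one, so by axiom (b) every 1-cell
isomorphic to a chosen extension is a `P`-homomorphism. -/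

namespace ExhibitsLeftExt

variable {a b c : 𝒞} {L : a ⟶ b} {I : a ⟶ c} {R : b ⟶ c} {η : I ⟶ L ≫ R}

theorem exists_comp_eq (h : ExhibitsLeftExt L I R η) {M N : b ⟶ c} (σ : N ⟶ M)
    [IsIso (L ◁ σ)] (t : R ⟶ M) : ∃ u : R ⟶ N, u ≫ σ = t := by
  obtain ⟨u, hu⟩ := (h N).surjective (η ≫ L ◁ t ≫ inv (L ◁ σ))
  refine ⟨u, h.hom_ext ?_⟩
  simp only at hu
  rw [whiskerLeft_comp, ← Category.assoc, hu]
  simp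

theorem of_iso_s7 (h : ExhibitsLeftExt L I R η) {I' : a ⟶ c} {R' : b ⟶ c} (φ : I' ≅ I)
    (θ : R ≅ R') {η' : I' ⟶ L ≫ R'} (hη' : φ.hom ≫ η ≫ L ◁ θ.hom = η') :
    ExhibitsLeftExt L I' R' η' := by
  intro M
  have hfactor : (fun σ : R' ⟶ M => η' ≫ L ◁ σ) =
      φ.symm.homFromEquiv ∘ (fun σ : R ⟶ M => η ≫ L ◁ σ) ∘ θ.symm.homFromEquiv := by
    funext σ
    simp [← hη']
  rw [hfactor]
  exact φ.symm.homFromEquiv.bijective.comp ((h M).comp θ.symm.homFromEquiv.bijective)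

theorem exists_iso_s7 (h : ExhibitsLeftExt L I R η) {R' : b ⟶ c} {η' : I ⟶ L ≫ R'}
    (h' : ExhibitsLeftExt L I R' η') : ∃ θ : R ≅ R', η ≫ L ◁ θ.hom = η' := by
  obtain ⟨f, hf⟩ := (h R').surjective η'
  obtain ⟨g, hg⟩ := (h' R).surjective η
  refine ⟨⟨f, g, h.hom_ext ?_, h'.hom_ext ?_⟩, hf⟩
  · simp only at hf hg
    rw [whiskerLeft_comp, ← Category.assoc, hf, hg, whiskerLeft_id, Category.comp_id]
  · simp only at hf hg
    rw [whiskerLeft_comp, ← Category.assoc, hg, hf, whiskerLeft_id, Category.comp_id]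

end ExhibitsLeftExt

namespace RespectsLeftExt

variable {a b c d : 𝒞} {L : a ⟶ b} {I : a ⟶ c} {R : b ⟶ c} {η : I ⟶ L ≫ R} {E : c ⟶ d}

theorem of_iso_s7 (h : RespectsLeftExt L I R η E) {E' : c ⟶ d} (θ : E ≅ E') :
    RespectsLeftExt L I R η E' :=
  ExhibitsLeftExt.of_iso_s7 h (whiskerLeftIso I θ).symm (whiskerLeftIso R θ) (by
    simp [whisker_exchange_assoc])

theorem of_iso_ext (h : RespectsLeftExt L I R η E) {R' : b ⟶ c} (θ : R ≅ R') :
    RespectsLeftExt L I R' (η ≫ L ◁ θ.hom) E :=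
  ExhibitsLeftExt.of_iso_s7 h (Iso.refl _) (whiskerRightIso θ E) (by simp)

end RespectsLeftExt

namespace CategoryTheory.Bicategory

theorem isIso_whiskerLeft_of_iso {a b c : 𝒞} {f g : a ⟶ b} (φ : f ≅ g) {h k : b ⟶ c}
    (σ : h ⟶ k) [IsIso (f ◁ σ)] : IsIso (g ◁ σ) := by
  rw [show g ◁ σ = φ.inv ▷ h ≫ f ◁ σ ≫ φ.hom ▷ k by simp [whisker_exchange]]
  infer_instance

namespace Adjunction

variable {a b : 𝒞} {l : a ⟶ b} {r : b ⟶ a} (adj : l ⊣ r)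

theorem exists_section_of_unit_factors {E : b ⟶ a} (e : E ⟶ r) (u : 𝟙 a ⟶ l ≫ E)
    (hu : u ≫ l ◁ e = adj.unit) : ∃ s : r ⟶ E, s ≫ e = 𝟙 r := by
  refine ⟨(ρ_ r).inv ≫ adj.homEquiv₁ u, ?_⟩
  calc ((ρ_ r).inv ≫ adj.homEquiv₁ u) ≫ e
      = 𝟙 _ ⊗≫ r ◁ u ⊗≫ (adj.counit ▷ E ≫ 𝟙 b ◁ e) ⊗≫ 𝟙 _ := by
        rw [homEquiv₁_apply]; bicategory
    _ = 𝟙 _ ⊗≫ r ◁ (u ≫ l ◁ e) ⊗≫ adj.counit ▷ r ⊗≫ 𝟙 _ := by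
        rw [← whisker_exchange]; bicategory
    _ = 𝟙 _ ⊗≫ rightZigzag adj.unit adj.counit ⊗≫ 𝟙 _ := by
        rw [hu]; bicategory
    _ = 𝟙 r := by
        rw [adj.right_triangle]; bicategory

theorem comp_whiskerLeft_homEquiv₂_eq_id {x : 𝒞} {y : x ⟶ b} {E : b ⟶ a}
    {w : E ≫ l ⟶ 𝟙 b} {γ : y ≫ r ⟶ y ≫ E}
    (hw : (γ ▷ l ≫ (α_ _ _ _).hom) ≫ y ◁ w = (α_ _ _ _).hom ≫ y ◁ adj.counit) :
    γ ≫ y ◁ (adj.homEquiv₂ w ≫ (λ_ r).hom) = 𝟙 _ := by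
  calc γ ≫ y ◁ (adj.homEquiv₂ w ≫ (λ_ r).hom)
      = 𝟙 _ ⊗≫ (γ ▷ 𝟙 a ≫ (y ≫ E) ◁ adj.unit) ⊗≫ y ◁ w ▷ r ⊗≫ 𝟙 _ := by
        rw [homEquiv₂_apply]; bicategory
    _ = 𝟙 _ ⊗≫ (y ≫ r) ◁ adj.unit ⊗≫ ((γ ▷ l ≫ (α_ _ _ _).hom) ≫ y ◁ w) ▷ r ⊗≫ 𝟙 _ := by
        rw [← whisker_exchange]; bicategory
    _ = 𝟙 _ ⊗≫ y ◁ rightZigzag adj.unit adj.counit ⊗≫ 𝟙 _ := by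
        rw [hw]; bicategory
    _ = 𝟙 _ := by
        rw [adj.right_triangle]; bicategory

end Adjunction

end CategoryTheory.Bicategory

theorem PHomomorphism.of_iso_s7 {D : KZDoctrine 𝒞} {X Y : 𝒞} {E E' : X ⟶ Y}
    (hE : PHomomorphism D E) (θ : E ≅ E') : PHomomorphism D E' :=
  fun G Gb η hη => (hE G Gb η hη).of_iso_s7 θ

namespace KZDoctrine

variable (D : KZDoctrine 𝒞)

theorem ext_pHomomorphism {A C : 𝒞} (F : A ⟶ D.P C) : PHomomorphism D (D.ext F) := by
  intro A' G Gb η hη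
  obtain ⟨θ, rfl⟩ := (D.ext_isLeftExt G).exists_iso_s7 hη
  exact (D.ext_respects G F).of_iso_ext θ

theorem exists_iso_ext_of_adjunction {A B : 𝒞} {L : A ⟶ B} {res : D.P B ⟶ D.P A}
    (adj : D.lan L ⊣ res) :
    ∃ θ : D.ext (D.y B ≫ res) ≅ res, (D.c (D.y B ≫ res)).hom ≫ D.y B ◁ θ.hom = 𝟙 _ := by
  set γ := D.c (D.y B ≫ res)
  obtain ⟨w, hw⟩ := (D.ext_respects (D.y B ≫ res) (L ≫ D.y B) (𝟙 _)).surjective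
    ((α_ _ _ _).hom ≫ D.y B ◁ adj.counit)
  set e := adj.homEquiv₂ w ≫ (λ_ res).hom
  have he : γ.hom ≫ D.y B ◁ e = 𝟙 _ := adj.comp_whiskerLeft_homEquiv₂_eq_id hw
  have hye : D.y B ◁ e = γ.inv := γ.hom_comp_eq_id.mp he
  have : IsIso ((L ≫ D.y B) ◁ e) := by rw [comp_whiskerLeft, hye]; infer_instance
  have : IsIso ((D.y A ≫ D.lan L) ◁ e) := isIso_whiskerLeft_of_iso (D.c (L ≫ D.y B)) e
  have : IsIso (D.y A ◁ D.lan L ◁ e) := by rw [comp_whiskerLeft_symm]; infer_instance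
  obtain ⟨u, hu⟩ := (D.y_selfExt A).exists_comp_eq (D.lan L ◁ e) adj.unit
  obtain ⟨s, hs⟩ := adj.exists_section_of_unit_factors e u hu
  have hys : D.y B ◁ s = γ.hom :=
    γ.comp_inv_eq_id.mp (by rw [← hye, ← whiskerLeft_comp, hs, whiskerLeft_id])
  have hes : e ≫ s = 𝟙 _ := (D.ext_isLeftExt _).hom_ext (by simp [hye, hys])
  exact ⟨⟨e, s, hes, hs⟩, he⟩

end KZDoctrine

/-- If `PL := lan L` has a right adjoint `res`, then the identity 2-cell
exhibits `res` as a left extension of `res ∘ y B` along `y B`; in particular `res`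
respects the left extension `𝟙 (P B)` of `y B` along `y B`, and `res` is a
`P`-homomorphism. -/
theorem stmt7 (D : KZDoctrine 𝒞) {A B : 𝒞} (L : A ⟶ B)
    (res : D.P B ⟶ D.P A) (adj : Bicategory.Adjunction (D.lan L) res) :
    ExhibitsLeftExt (D.y B) (D.y B ≫ res) res (𝟙 (D.y B ≫ res)) ∧
    RespectsLeftExt (D.y B) (D.y B) (𝟙 (D.P B)) (ρ_ (D.y B)).inv res ∧
    PHomomorphism D res := by
  obtain ⟨θ, hθ⟩ := D.exists_iso_ext_of_adjunction adj
  have hres : ExhibitsLeftExt (D.y B) (D.y B ≫ res) res (𝟙 (D.y B ≫ res)) :=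
    (D.ext_isLeftExt _).of_iso_s7 (Iso.refl _) θ (by simpa using hθ)
  exact ⟨hres, hres.of_iso_s7 (Iso.refl _) (λ_ res).symm (by simp),
    PHomomorphism.of_iso_s7 (D.ext_pHomomorphism _) θ⟩
end
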